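/- arXiv:2405.13136 — 6 statements merged into one kernel-verified Lean document; each statement's English description precedes it below -/
import Mathlib

section
/- Consider a 2-armed bandit with deterministic rewards r_1 > r_2 ≥ 0, gap Δ := r_1 − r_2, and a softmax policy assigning probability p ∈ (0,1) to arm 1. Let ĝ be the importance-sampling policy gradient estimator: with probability p, ĝ = ((1−p)r_1, −(1−p)r_1), and with probability 1−p, ĝ = (−p·r_2, p·r_2). Then E[‖ĝ‖²] = 2p(1−p)[(1−p)r_1² + p·r_2²], the true gradient g satisfies ‖g‖ = √2·p(1−p)·Δ, and hence E[‖ĝ‖²] = (√2·[(1−p)r_1² + p·r_2²]/Δ)·‖g‖. -/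
/-!
Arm 1 has advantage `r₁ - ⟨π, r⟩ = (1 - p) Δ` and arm 2 has advantage `-p Δ`, so both coordinates
of the true gradient `g(a) = π(a) (r(a) - ⟨π, r⟩)` have absolute value `p (1 - p) Δ` and
`‖g‖ = √2 p (1 - p) Δ`. The second moment of the estimator is a direct two-point computation;
dividing it by `‖g‖` leaves the factor `√2 ((1 - p) r₁² + p r₂²) / Δ`.
-/

namespace TwoArmBandit

lemma importanceSampling_secondMoment (r1 r2 p : ℝ) :
    p * (((1 - p) * r1) ^ 2 + (-((1 - p) * r1)) ^ 2)
      + (1 - p) * ((-(p * r2)) ^ 2 + (p * r2) ^ 2)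
      = 2 * p * (1 - p) * ((1 - p) * r1 ^ 2 + p * r2 ^ 2) := by
  ring

lemma trueGradient_normSq (r1 r2 p : ℝ) :
    (p * (r1 - (p * r1 + (1 - p) * r2))) ^ 2 + ((1 - p) * (r2 - (p * r1 + (1 - p) * r2))) ^ 2
      = 2 * (p * (1 - p) * (r1 - r2)) ^ 2 := by
  ring

lemma sqrt_two_mul_sq {x : ℝ} (hx : 0 ≤ x) : Real.sqrt (2 * x ^ 2) = Real.sqrt 2 * x := by
  rw [Real.sqrt_mul zero_le_two, Real.sqrt_sq hx]

lemma trueGradient_norm {r1 r2 p : ℝ} (h21 : r2 < r1) (hp0 : 0 < p) (hp1 : p < 1) :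
    Real.sqrt ((p * (r1 - (p * r1 + (1 - p) * r2))) ^ 2
      + ((1 - p) * (r2 - (p * r1 + (1 - p) * r2))) ^ 2)
      = Real.sqrt 2 * (p * (1 - p) * (r1 - r2)) := by
  have hq : 0 < 1 - p := sub_pos.mpr hp1
  have hΔ : 0 < r1 - r2 := sub_pos.mpr h21
  rw [trueGradient_normSq, sqrt_two_mul_sq (by positivity)]

lemma secondMoment_eq_mul_trueGradient_norm {C p q Δ : ℝ} (hΔ : Δ ≠ 0) :
    2 * p * q * C = Real.sqrt 2 * C / Δ * (Real.sqrt 2 * (p * q * Δ)) := by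
  have hsqrt : Real.sqrt 2 * Real.sqrt 2 = 2 := Real.mul_self_sqrt zero_le_two
  field_simp
  linear_combination (-(C * p * q)) * hsqrt

end TwoArmBandit

open TwoArmBandit in
theorem stmt_5_general (r1 r2 p : ℝ) (h21 : r2 < r1) (hp0 : 0 < p) (hp1 : p < 1) :
    let Δ := r1 - r2
    let Esq := p * (((1 - p) * r1) ^ 2 + (-((1 - p) * r1)) ^ 2)
      + (1 - p) * ((-(p * r2)) ^ 2 + (p * r2) ^ 2)
    let gnorm := Real.sqrt ((p * (r1 - (p * r1 + (1 - p) * r2))) ^ 2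
      + ((1 - p) * (r2 - (p * r1 + (1 - p) * r2))) ^ 2)
    Esq = 2 * p * (1 - p) * ((1 - p) * r1 ^ 2 + p * r2 ^ 2) ∧
    gnorm = Real.sqrt 2 * (p * (1 - p) * Δ) ∧
    Esq = Real.sqrt 2 * ((1 - p) * r1 ^ 2 + p * r2 ^ 2) / Δ * gnorm := by
  intro Δ Esq gnorm
  have hEsq : Esq = 2 * p * (1 - p) * ((1 - p) * r1 ^ 2 + p * r2 ^ 2) :=
    importanceSampling_secondMoment r1 r2 p
  have hgnorm : gnorm = Real.sqrt 2 * (p * (1 - p) * Δ) := trueGradient_norm h21 hp0 hp1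
  refine ⟨hEsq, hgnorm, ?_⟩
  rw [hEsq, hgnorm]
  exact secondMoment_eq_mul_trueGradient_norm (sub_pos.mpr h21).ne'

theorem stmt_5 (r1 r2 p : ℝ) (h21 : r2 < r1) (h2 : 0 ≤ r2) (hp0 : 0 < p) (hp1 : p < 1) :
    let Δ := r1 - r2
    let Esq := p * (((1 - p) * r1) ^ 2 + (-((1 - p) * r1)) ^ 2)
      + (1 - p) * ((-(p * r2)) ^ 2 + (p * r2) ^ 2)
    let gnorm := Real.sqrt ((p * (r1 - (p * r1 + (1 - p) * r2))) ^ 2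
      + ((1 - p) * (r2 - (p * r1 + (1 - p) * r2))) ^ 2)
    Esq = 2 * p * (1 - p) * ((1 - p) * r1 ^ 2 + p * r2 ^ 2) ∧
    gnorm = Real.sqrt 2 * (p * (1 - p) * Δ) ∧
    Esq = Real.sqrt 2 * ((1 - p) * r1 ^ 2 + p * r2 ^ 2) / Δ * gnorm :=
  stmt_5_general r1 r2 p h21 hp0 hp1
end

section
/- Let π_τ* = softmax(r/τ) be the softmax policy for reward vector r ∈ ℝ^A with temperature τ > 0, and let π* be the deterministic policy on the optimal arm a* = argmax r. Then ⟨π* − π_τ*, r⟩ ≤ τ·W((A−1)/e), where W is the principal branch of the Lambert W function. -/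
/-! The tangent-line inequality `t + 1 ≤ exp t` at `t = c - y - (w + 1)` gives
`exp y * (c - y) ≤ w * exp y + exp (c - (w + 1))` for every `y`. Summing over the `n - 1` arms
other than the reference arm, the constant terms add up to `(n - 1) * exp (c - (w + 1))`, which
equals `w * exp c` exactly when `w * exp (w + 1) = n - 1`; so the unnormalized gap is at most
`w` times the partition function. -/

open Finset Real

lemma Real.exp_mul_sub_le (c y w : ℝ) :
    exp y * (c - y) ≤ w * exp y + exp (c - (w + 1)) := by
  have htangent := add_one_le_exp (c - y - (w + 1))
  have hsplit : exp (c - (w + 1)) = exp y * exp (c - y - (w + 1)) := by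
    rw [← exp_add]; ring_nf
  rw [hsplit]
  nlinarith [mul_le_mul_of_nonneg_left htangent (exp_pos y).le]

lemma sum_exp_mul_sub_le {ι : Type*} [Fintype ι] [DecidableEq ι] (f : ι → ℝ) (i : ι) {w : ℝ}
    (hw : w * exp (w + 1) = Fintype.card ι - 1) :
    ∑ a, exp (f a) * (f i - f a) ≤ w * ∑ a, exp (f a) := by
  have hi := mem_univ i
  calc ∑ a, exp (f a) * (f i - f a)
      = ∑ a ∈ univ.erase i, exp (f a) * (f i - f a) := (sum_erase _ (by simp)).symm
    _ ≤ ∑ a ∈ univ.erase i, (w * exp (f a) + exp (f i - (w + 1))) :=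
        sum_le_sum fun a _ => exp_mul_sub_le _ _ _
    _ = w * (∑ a, exp (f a) - exp (f i)) + (Fintype.card ι - 1) * exp (f i - (w + 1)) := by
        rw [sum_add_distrib, ← mul_sum, sum_erase_eq_sub hi, sum_const, nsmul_eq_mul,
          cast_card_erase_of_mem hi, card_univ]
    _ = w * ∑ a, exp (f a) := by
        rw [← hw, exp_sub]
        field_simp
        ring

lemma sum_softmax_mul_sub_le {ι : Type*} [Fintype ι] (f : ι → ℝ) (i : ι) {w : ℝ}
    (hw : w * exp (w + 1) = Fintype.card ι - 1) :
    ∑ a, (exp (f a) / ∑ b, exp (f b)) * (f i - f a) ≤ w := by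
  classical
  have hZ : 0 < ∑ b, exp (f b) := sum_pos (fun b _ => exp_pos _) ⟨i, mem_univ i⟩
  simp_rw [div_mul_eq_mul_div, ← sum_div]
  exact (div_le_iff₀ hZ).2 (sum_exp_mul_sub_le f i hw)

theorem stmt_10_general (A : ℕ) (τ : ℝ) (hτ : 0 < τ) (r : Fin A → ℝ)
    (astar : Fin A)
    (w : ℝ) (hW : w * Real.exp w = ((A : ℝ) - 1) / Real.exp 1) :
    ∑ a, (Real.exp (r a / τ) / ∑ a', Real.exp (r a' / τ)) * (r astar - r a) ≤ τ * w := by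
  have hw : w * exp (w + 1) = Fintype.card (Fin A) - 1 := by
    rw [Fintype.card_fin, exp_add, ← mul_assoc, hW, div_mul_cancel₀ _ (exp_pos 1).ne']
  have hgap := sum_softmax_mul_sub_le (fun a => r a / τ) astar hw
  have hscale : ∀ a, r astar - r a = τ * (r astar / τ - r a / τ) := fun a => by
    field_simp
  simp_rw [hscale, mul_left_comm _ τ, ← mul_sum]
  exact mul_le_mul_of_nonneg_left hgap hτ.le

theorem stmt_10 (A : ℕ) (hA : 2 ≤ A) (τ : ℝ) (hτ : 0 < τ) (r : Fin A → ℝ)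
    (astar : Fin A) (hopt : ∀ a, r a ≤ r astar)
    (w : ℝ) (hw : 0 ≤ w) (hW : w * Real.exp w = ((A : ℝ) - 1) / Real.exp 1) :
    ∑ a, (Real.exp (r a / τ) / ∑ a', Real.exp (r a' / τ)) * (r astar - r a) ≤ τ * w :=
  stmt_10_general A τ hτ r astar w hW
end

section
/- For the function Δ ↦ (A−1)·Δ / (e^{Δ/τ} + A − 1) with A ≥ 2 integer and τ > 0, the unique stationary point over Δ > 0 is Δ = τ·(W((A−1)/e) + 1) and at this point the function value equals τ·W((A−1)/e). -/
/-!
Write `c = A - 1` and `f Δ = c Δ / (exp (Δ / τ) + c)`. The numerator of `f'` vanishes exactly when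
`(Δ/τ - 1) exp (Δ/τ) = c`, i.e. when `x = Δ/τ - 1` solves `x eˣ = c / e`. Since `x ↦ x eˣ` is strictly
increasing on `[-1, ∞)` and `x > -1`, this forces `x = W(c/e)`. At that point `e^{Δ/τ} = c / W`,
and the value of `f` collapses to `τ W`.
-/

open Real Set

theorem strictMonoOn_mul_exp : StrictMonoOn (fun x : ℝ => x * exp x) (Ici (-1)) := by
  refine strictMonoOn_of_deriv_pos (convex_Ici _) (by fun_prop) fun x hx => ?_
  rw [interior_Ici, mem_Ioi] at hx
  rw [((hasDerivAt_id' x).fun_mul (hasDerivAt_exp x)).deriv]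
  nlinarith [exp_pos x]

theorem mul_exp_eq_mul_exp_iff {x y : ℝ} (hx : -1 ≤ x) (hy : -1 ≤ y) :
    x * exp x = y * exp y ↔ x = y :=
  strictMonoOn_mul_exp.injOn.eq_iff hx hy

theorem hasDerivAt_mul_div_exp_div_add {c : ℝ} (hc : 0 ≤ c) (τ Δ : ℝ) :
    HasDerivAt (fun Δ => c * Δ / (exp (Δ / τ) + c))
      (c * (exp (Δ / τ) + c - Δ / τ * exp (Δ / τ)) / (exp (Δ / τ) + c) ^ 2) Δ := by
  have hnum : HasDerivAt (fun Δ => c * Δ) c Δ := by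
    simpa using (hasDerivAt_id Δ).const_mul c
  have hden : HasDerivAt (fun Δ => exp (Δ / τ) + c) (exp (Δ / τ) * (1 / τ)) Δ :=
    ((hasDerivAt_id' Δ).div_const τ).exp.add_const c
  exact (hnum.fun_div hden (by positivity)).congr_deriv (by ring)

theorem deriv_mul_div_exp_div_add_eq_zero_iff {c : ℝ} (hc : 0 < c) (τ Δ : ℝ) :
    deriv (fun Δ => c * Δ / (exp (Δ / τ) + c)) Δ = 0 ↔
      (Δ / τ - 1) * exp (Δ / τ - 1) = c / exp 1 := by
  have hden : (exp (Δ / τ) + c) ^ 2 ≠ 0 := by positivity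
  have hsplit : exp (Δ / τ) = exp (Δ / τ - 1) * exp 1 := by rw [← exp_add, sub_add_cancel]
  rw [(hasDerivAt_mul_div_exp_div_add hc.le τ Δ).deriv, div_eq_zero_iff, or_iff_left hden,
    mul_eq_zero, or_iff_right hc.ne', eq_div_iff (exp_pos 1).ne', hsplit]
  constructor <;> intro h <;> linarith

theorem mul_div_exp_add_eq_of_mul_exp_eq {c w : ℝ} (hc : 0 < c) (hw_pos : 0 < w)
    (hw : w * exp w = c / exp 1) (τ : ℝ) : c * (τ * (w + 1)) / (exp (w + 1) + c) = τ * w := by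
  have hexp : exp (w + 1) = c / w := by
    rw [eq_div_iff hw_pos.ne', exp_add, mul_comm, ← mul_assoc, hw]
    field_simp
  rw [hexp]
  field_simp
  ring

theorem stmt_11_general (A : ℕ) (hA : 2 ≤ A) (τ : ℝ) (hτ : 0 < τ)
    (w : ℝ) (hW : w * Real.exp w = ((A : ℝ) - 1) / Real.exp 1) :
    (∀ Δ : ℝ, 0 < Δ →
      (deriv (fun Δ : ℝ => ((A : ℝ) - 1) * Δ / (Real.exp (Δ / τ) + (A : ℝ) - 1)) Δ = 0 ↔
        Δ = τ * (w + 1))) ∧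
    ((A : ℝ) - 1) * (τ * (w + 1)) / (Real.exp ((τ * (w + 1)) / τ) + (A : ℝ) - 1) = τ * w := by
  have hc : 0 < (A : ℝ) - 1 := by
    have : (2 : ℝ) ≤ A := by exact_mod_cast hA
    linarith
  have hw_pos : 0 < w := pos_of_mul_pos_left (hW ▸ div_pos hc (exp_pos 1)) (exp_pos w).le
  simp only [add_sub_assoc]
  refine ⟨fun Δ hΔ => ?_, ?_⟩
  · rw [deriv_mul_div_exp_div_add_eq_zero_iff hc τ Δ, ← hW,
      mul_exp_eq_mul_exp_iff (by linarith [div_pos hΔ hτ]) (by linarith only [hw_pos]),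
      sub_eq_iff_eq_add, div_eq_iff hτ.ne', mul_comm]
  · rw [mul_div_cancel_left₀ _ hτ.ne']
    exact mul_div_exp_add_eq_of_mul_exp_eq hc hw_pos hW τ

theorem stmt_11 (A : ℕ) (hA : 2 ≤ A) (τ : ℝ) (hτ : 0 < τ)
    (w : ℝ) (hw : 0 ≤ w) (hW : w * Real.exp w = ((A : ℝ) - 1) / Real.exp 1) :
    (∀ Δ : ℝ, 0 < Δ →
      (deriv (fun Δ : ℝ => ((A : ℝ) - 1) * Δ / (Real.exp (Δ / τ) + (A : ℝ) - 1)) Δ = 0 ↔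
        Δ = τ * (w + 1))) ∧
    ((A : ℝ) - 1) * (τ * (w + 1)) / (Real.exp ((τ * (w + 1)) / τ) + (A : ℝ) - 1) = τ * w :=
  stmt_11_general A hA τ hτ w hW
end

section
/- Fix reward vector r ∈ ℝ^A and temperatures 0 < τ₂ < τ₁ ≤ 1. Define f^τ(π) := ⟨π, r − τ log π⟩ and f^{*_τ} := max over probability vectors π of f^τ(π). Then for any probability vector π, (f^{*_{τ₂}} − f^{τ₂}(π)) − (f^{*_{τ₁}} − f^{τ₁}(π)) ≤ ⟨π* − π_{τ₁}*, r⟩ + τ₁·log A, where π_{τ₁}* := argmax f^{τ₁} and π* is the optimal (unregularized) policy. -/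
def IsProbVec {A : ℕ} (q : Fin A → ℝ) : Prop := (∀ a, 0 ≤ q a) ∧ ∑ a, q a = 1

noncomputable def entReg {A : ℕ} (r : Fin A → ℝ) (τ : ℝ) (q : Fin A → ℝ) : ℝ :=
  ∑ a, q a * (r a - τ * Real.log (q a))

open Real Finset

/-!
With the entropy `H(π) = ∑ negMulLog (π a)` one has `f^τ(π) = ⟨π, r⟩ + τ H(π)`, so the left-hand
side equals `⟨π₂ - π₁, r⟩ + τ₂ H(π₂) + (τ₁ - τ₂) H(q) - τ₁ H(π₁)`. Optimality of `π*` bounds the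
reward term, and `0 ≤ H ≤ log A` (the upper bound is Jensen's inequality for the concave `negMulLog`
with uniform weights) bounds the entropy terms, whose weights `τ₂` and `τ₁ - τ₂` add up to `τ₁`.
-/

namespace Real

variable {ι : Type*} [Fintype ι] {q : ι → ℝ}

lemma sum_negMulLog_nonneg (h0 : ∀ i, 0 ≤ q i) (h1 : ∑ i, q i = 1) :
    0 ≤ ∑ i, negMulLog (q i) :=
  sum_nonneg fun i _ ↦ negMulLog_nonneg (h0 i)
    (h1 ▸ single_le_sum (fun j _ ↦ h0 j) (mem_univ i))

lemma sum_negMulLog_le_log_card (h0 : ∀ i, 0 ≤ q i) (h1 : ∑ i, q i = 1) :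
    ∑ i, negMulLog (q i) ≤ log (Fintype.card ι) := by
  have : Nonempty ι := univ_nonempty_iff.mp (nonempty_of_sum_ne_zero (h1 ▸ one_ne_zero))
  set n : ℝ := (Fintype.card ι : ℝ)
  have hn : 0 < n := by simp only [n]; exact_mod_cast Fintype.card_pos
  have jensen : ∑ i, n⁻¹ • negMulLog (q i) ≤ negMulLog (∑ i, n⁻¹ • q i) :=
    concaveOn_negMulLog.le_map_sum (fun _ _ ↦ by positivity) (by simp [n, hn.ne'])
      (fun i _ ↦ Set.mem_Ici.mpr (h0 i))
  calc ∑ i, negMulLog (q i) = n * ∑ i, n⁻¹ • negMulLog (q i) := by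
        rw [← smul_sum, smul_eq_mul]; field_simp
    _ ≤ n * negMulLog (∑ i, n⁻¹ • q i) := by gcongr
    _ = log n := by
        rw [← smul_sum, h1, smul_eq_mul, mul_one, negMulLog, log_inv]; field_simp

end Real

lemma entReg_eq_add_mul_sum_negMulLog {A : ℕ} (r : Fin A → ℝ) (τ : ℝ) (q : Fin A → ℝ) :
    entReg r τ q = ∑ a, q a * r a + τ * ∑ a, negMulLog (q a) := by
  simp only [entReg, negMulLog, mul_sum, ← sum_add_distrib]
  congr 1 with a
  ring

lemma IsProbVec.sum_negMulLog_nonneg {A : ℕ} {q : Fin A → ℝ} (hq : IsProbVec q) :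
    0 ≤ ∑ a, negMulLog (q a) :=
  Real.sum_negMulLog_nonneg hq.1 hq.2

lemma IsProbVec.sum_negMulLog_le_log {A : ℕ} {q : Fin A → ℝ} (hq : IsProbVec q) :
    ∑ a, negMulLog (q a) ≤ log A := by
  simpa using Real.sum_negMulLog_le_log_card hq.1 hq.2

theorem stmt_13_general (A : ℕ) (r : Fin A → ℝ) (τ1 τ2 : ℝ)
    (hτ2 : 0 < τ2) (hτ : τ2 < τ1)
    (π2 π1 πstar q : Fin A → ℝ)
    (hπ2 : IsProbVec π2) (hπ1 : IsProbVec π1) (hq : IsProbVec q)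
    (hmaxs : ∀ q', IsProbVec q' → ∑ a, q' a * r a ≤ ∑ a, πstar a * r a) :
    (entReg r τ2 π2 - entReg r τ2 q) - (entReg r τ1 π1 - entReg r τ1 q) ≤
      (∑ a, πstar a * r a - ∑ a, π1 a * r a) + τ1 * Real.log A := by
  simp only [entReg_eq_add_mul_sum_negMulLog]
  have hreward := hmaxs π2 hπ2
  have hπ2_ent := mul_le_mul_of_nonneg_left hπ2.sum_negMulLog_le_log hτ2.le
  have hq_ent := mul_le_mul_of_nonneg_left hq.sum_negMulLog_le_log (sub_nonneg.mpr hτ.le)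
  have hπ1_ent := mul_nonneg (hτ2.trans hτ).le hπ1.sum_negMulLog_nonneg
  linarith

theorem stmt_13 (A : ℕ) (hA : 1 ≤ A) (r : Fin A → ℝ) (τ1 τ2 : ℝ)
    (hτ2 : 0 < τ2) (hτ : τ2 < τ1) (hτ1 : τ1 ≤ 1)
    (π2 π1 πstar q : Fin A → ℝ)
    (hπ2 : IsProbVec π2) (hπ1 : IsProbVec π1) (hπs : IsProbVec πstar) (hq : IsProbVec q)
    (hmax2 : ∀ q', IsProbVec q' → entReg r τ2 q' ≤ entReg r τ2 π2)
    (hmax1 : ∀ q', IsProbVec q' → entReg r τ1 q' ≤ entReg r τ1 π1)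
    (hmaxs : ∀ q', IsProbVec q' → ∑ a, q' a * r a ≤ ∑ a, πstar a * r a) :
    (entReg r τ2 π2 - entReg r τ2 q) - (entReg r τ1 π1 - entReg r τ1 q) ≤
      (∑ a, πstar a * r a - ∑ a, π1 a * r a) + τ1 * Real.log A :=
  stmt_13_general A r τ1 τ2 hτ2 hτ π2 π1 πstar q hπ2 hπ1 hq hmaxs
end

section
/- Let T ≥ 2 and β ∈ [1, T), and set α := (β/T)^{1/T}. Then α^{T+1}/(1 − α) ≤ 2β/log(T/β). -/
/-!
Write `α = (β/T)^(1/T) = exp (-x)` with `x = log (T/β) / T`. The numerator is at most `β/T`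
because `α^(T+1) = (β/T)^((T+1)/T)` and `β/T < 1`. Since `β ≥ 1` we have `log (T/β) ≤ log T ≤ T`,
so `x ≤ 1`, and on `[0, 1]` the bound `exp (-x) ≤ 1/(1+x)` gives `1 - α ≥ x/2`.
-/

open Real

lemma Real.half_le_one_sub_exp_neg {x : ℝ} (hx0 : 0 ≤ x) (hx1 : x ≤ 1) :
    x / 2 ≤ 1 - exp (-x) := by
  have hexp : exp (-x) * (1 + x) ≤ 1 := by
    calc exp (-x) * (1 + x) ≤ exp (-x) * exp x := by
          gcongr; linarith [add_one_le_exp x]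
      _ = 1 := by rw [← exp_add, neg_add_cancel, exp_zero]
  nlinarith [exp_pos (-x)]

lemma Real.rpow_one_div_eq_exp_neg {y : ℝ} (hy : 0 < y) (T : ℝ) :
    y ^ (1 / T) = exp (-(log y⁻¹ / T)) := by
  rw [rpow_def_of_pos hy, log_inv]
  ring_nf

lemma Real.rpow_one_div_rpow_add_one_le {y T : ℝ} (hy0 : 0 < y) (hy1 : y ≤ 1) (hT : 0 < T) :
    (y ^ (1 / T)) ^ (T + 1) ≤ y := by
  rw [← rpow_mul hy0.le]
  refine rpow_le_self_of_le_one hy0.le hy1 ?_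
  rw [one_div, inv_mul_eq_div, le_div_iff₀ hT]
  linarith

lemma Real.rpow_one_div_rpow_add_one_div_one_sub_le {y T : ℝ} (hy0 : 0 < y) (hy1 : y < 1)
    (hT : 0 < T) (hlog : log y⁻¹ ≤ T) :
    (y ^ (1 / T)) ^ (T + 1) / (1 - y ^ (1 / T)) ≤ 2 * T * y / log y⁻¹ := by
  have hlog0 : 0 < log y⁻¹ := log_pos ((one_lt_inv₀ hy0).mpr hy1)
  have hden : log y⁻¹ / T / 2 ≤ 1 - y ^ (1 / T) := by
    rw [rpow_one_div_eq_exp_neg hy0]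
    exact half_le_one_sub_exp_neg (by positivity) ((div_le_one hT).mpr hlog)
  calc (y ^ (1 / T)) ^ (T + 1) / (1 - y ^ (1 / T))
      ≤ y / (log y⁻¹ / T / 2) :=
        div_le_div₀ hy0.le (rpow_one_div_rpow_add_one_le hy0 hy1.le hT) (by positivity) hden
    _ = 2 * T * y / log y⁻¹ := by field_simp

lemma Real.log_div_le_self {T β : ℝ} (hT : 0 < T) (hβ : 1 ≤ β) : log (T / β) ≤ T := by
  calc log (T / β) ≤ log T := log_le_log (by positivity) (div_le_self hT.le hβ)
    _ ≤ T - 1 := log_le_sub_one_of_pos hT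
    _ ≤ T := by linarith

theorem stmt_16_general (T β : ℝ) (hβ1 : 1 ≤ β) (hβT : β < T) :
    ((β / T) ^ (1 / T)) ^ (T + 1) / (1 - (β / T) ^ (1 / T)) ≤
      2 * β / Real.log (T / β) := by
  have hβ0 : 0 < β := by linarith
  have hT0 : 0 < T := by linarith
  have hlog : Real.log (β / T)⁻¹ = Real.log (T / β) := by rw [inv_div]
  calc ((β / T) ^ (1 / T)) ^ (T + 1) / (1 - (β / T) ^ (1 / T))
      ≤ 2 * T * (β / T) / Real.log (β / T)⁻¹ :=
        Real.rpow_one_div_rpow_add_one_div_one_sub_le (div_pos hβ0 hT0) ((div_lt_one hT0).mpr hβT)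
          hT0 (hlog ▸ Real.log_div_le_self hT0 hβ1)
    _ = 2 * β / Real.log (T / β) := by rw [hlog]; field_simp

theorem stmt_16 (T β : ℝ) (hT : 2 ≤ T) (hβ1 : 1 ≤ β) (hβT : β < T) :
    ((β / T) ^ (1 / T)) ^ (T + 1) / (1 - (β / T) ^ (1 / T)) ≤
      2 * β / Real.log (T / β) :=
  stmt_16_general T β hβ1 hβT
end

section
/- In the exact two-arm bandit with softmax parameterization, let f(θ) = ⟨π_θ, r⟩ with gradient components ∇f(θ)(a) = π_θ(a)(r(a) − ⟨π_θ, r⟩). For a 2-dimensional parameter with p := π_θ(a*) the probability of the optimal arm and Δ* := r(a*) − r(a') the gap, the gradient norm satisfies ‖∇f(θ)‖ = √2·p(1−p)·Δ* and the suboptimality satisfies ⟨π* − π_θ, r⟩ = (1−p)·Δ*; consequently ‖∇f(θ)‖ ≥ p·⟨π* − π_θ, r⟩ and ‖∇f(θ)‖ ≤ √2·⟨π* − π_θ, r⟩. -/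
/-!
With `v = p r₁ + (1 - p) r₂`, the two gradient components `p (r₁ - v)` and `(1 - p) (r₂ - v)` are
`± p (1 - p) (r₁ - r₂)`, so the gradient norm is `√2 · p · ((1 - p)(r₁ - r₂))` while the
suboptimality is `(1 - p)(r₁ - r₂)`. Both Łojasiewicz-type bounds then come from `1 ≤ √2` and `p ≤ 1`.
-/

namespace TwoArmBandit

theorem gradient_sq_sum_eq (p r₁ r₂ : ℝ) :
    (p * (r₁ - (p * r₁ + (1 - p) * r₂))) ^ 2 + ((1 - p) * (r₂ - (p * r₁ + (1 - p) * r₂))) ^ 2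
      = 2 * (p * (1 - p) * (r₁ - r₂)) ^ 2 := by
  ring

theorem gradient_norm_eq (p r₁ r₂ : ℝ) :
    √((p * (r₁ - (p * r₁ + (1 - p) * r₂))) ^ 2 + ((1 - p) * (r₂ - (p * r₁ + (1 - p) * r₂))) ^ 2)
      = √2 * |p * (1 - p) * (r₁ - r₂)| := by
  rw [gradient_sq_sum_eq, Real.sqrt_mul zero_le_two, Real.sqrt_sq_eq_abs]

theorem suboptimality_eq (p r₁ r₂ : ℝ) :
    r₁ - (p * r₁ + (1 - p) * r₂) = (1 - p) * (r₁ - r₂) := by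
  ring

end TwoArmBandit

theorem le_sqrt_two_mul {x : ℝ} (hx : 0 ≤ x) : x ≤ √2 * x :=
  le_mul_of_one_le_left hx (Real.one_lt_sqrt_two).le

theorem sqrt_two_mul_mul_le {p x : ℝ} (hp : p ≤ 1) (hx : 0 ≤ x) : √2 * (p * x) ≤ √2 * x :=
  mul_le_mul_of_nonneg_left (mul_le_of_le_one_left hx hp) (Real.sqrt_nonneg 2)

theorem stmt_18 (r1 r2 p : ℝ) (hr : r2 < r1) (hp0 : 0 < p) (hp1 : p < 1) :
    let vbar := p * r1 + (1 - p) * r2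
    let gnorm := Real.sqrt ((p * (r1 - vbar)) ^ 2 + ((1 - p) * (r2 - vbar)) ^ 2)
    let subopt := r1 - vbar
    gnorm = Real.sqrt 2 * (p * (1 - p) * (r1 - r2)) ∧
    subopt = (1 - p) * (r1 - r2) ∧
    p * subopt ≤ gnorm ∧ gnorm ≤ Real.sqrt 2 * subopt := by
  intro vbar gnorm subopt
  have hsubopt_nonneg : 0 ≤ (1 - p) * (r1 - r2) := mul_nonneg (by linarith) (by linarith)
  have hgnorm_nonneg : 0 ≤ p * (1 - p) * (r1 - r2) :=
    mul_assoc p (1 - p) (r1 - r2) ▸ mul_nonneg hp0.le hsubopt_nonneg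
  have hgnorm : gnorm = √2 * (p * (1 - p) * (r1 - r2)) :=
    (TwoArmBandit.gradient_norm_eq p r1 r2).trans (by rw [abs_of_nonneg hgnorm_nonneg])
  have hsubopt : subopt = (1 - p) * (r1 - r2) := TwoArmBandit.suboptimality_eq p r1 r2
  refine ⟨hgnorm, hsubopt, ?_, ?_⟩
  · rw [hgnorm, hsubopt, ← mul_assoc]
    exact le_sqrt_two_mul hgnorm_nonneg
  · rw [hgnorm, hsubopt, mul_assoc]
    exact sqrt_two_mul_mul_le hp1.le hsubopt_nonneg
end
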